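/- arXiv:1610.06472 — 2 statements merged into one kernel-verified Lean document; each statement's English description precedes it below -/
import Mathlib

section
/- Let op_N(a) = ℓ²/12 · I + (ℓ²/(2π²)) ∑_{n=1}^∞ ((-1)ⁿ/n²)(T^{n,0} + T^{-n,0}) acting on ℂᴺ, where (T^{n,0}ψ)_m = ψ_{m+n} (indices mod N) and ℓ > 0. Then the plane wave ψ^{(ν)} with ψ^{(ν)}_m = e^{2πiνm/N} is an eigenvector of op_N(a) with eigenvalue (νℓ/N)². -/
/-- Translation: (T^{n,0}ψ)_m = ψ_{m+n}. -/
def Tshift (N : ℕ) (n : ℤ) (ψ : ZMod N → ℂ) (m : ZMod N) : ℂ := ψ (m + (n : ZMod N))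

/-- Plane wave ψ^{(ν)}_m = e^{2πiνm/N}. -/
noncomputable def planeWave (N : ℕ) [NeZero N] (ν : ℤ) (m : ZMod N) : ℂ :=
  Complex.exp ((2 * Real.pi * Complex.I * (ν : ℂ) * (m.val : ℂ)) / N)

/-- op_N(a) = ℓ²/12 · I + (ℓ²/(2π²)) ∑_{n≥1} ((-1)ⁿ/n²)(T^{n,0} + T^{-n,0}). -/
noncomputable def opA (N : ℕ) (ℓ : ℝ) (ψ : ZMod N → ℂ) (m : ZMod N) : ℂ :=
  ((ℓ^2/12 : ℝ) : ℂ) * ψ m + ((ℓ^2/(2*Real.pi^2) : ℝ) : ℂ) *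
    ∑' n : ℕ, ((-1 : ℂ)^(n+1) / ((n : ℂ)+1)^2) *
      (Tshift N ((n : ℤ)+1) ψ m + Tshift N (-((n : ℤ)+1)) ψ m)

/-!
The plane wave is the additive character `m ↦ e^{2πiνm/N}` of `ZMod N`, so `T^{±n,0}` multiplies
it by `e^{±2πiνn/N}` and `T^{n,0} + T^{-n,0}` by `2 cos(2πνn/N)`. The operator series thus
becomes the Fourier series of `x ↦ π²x² - π²/12` on `[-1/2, 1/2]`, evaluated at `x = ν/N`.
-/

open Complex Real Set

theorem hasSum_neg_one_pow_div_sq_mul_cos {x : ℝ} (hx : x ∈ Icc (-1 / 2 : ℝ) (1 / 2)) :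
    HasSum (fun n : ℕ => (-1 : ℝ) ^ (n + 1) / ((n : ℝ) + 1) ^ 2 * Real.cos (2 * π * x * (n + 1)))
      (π ^ 2 * x ^ 2 - π ^ 2 / 12) := by
  -- the Fourier series of `B₂` on `[0, 1]`, translated by `1/2`
  have H := hasSum_one_div_nat_pow_mul_cos one_ne_zero
    (show x + 1 / 2 ∈ Icc (0 : ℝ) 1 from ⟨by linarith [hx.1], by linarith [hx.2]⟩)
  rw [← hasSum_nat_add_iff' 1] at H
  have hB : bernoulliFun 2 (x + 1 / 2) = x ^ 2 - 1 / 12 := by rw [bernoulliFun_two]; ring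
  rw [bernoulliFun] at hB
  norm_num [hB] at H
  rw [show (2 * π) ^ 2 / 2 / 2 * (x ^ 2 - 1 / 12) = π ^ 2 * x ^ 2 - π ^ 2 / 12 by ring] at H
  refine H.congr_fun fun n => ?_
  have harg : 2 * π * ((n : ℝ) + 1) * (x + 1 / 2) = 2 * π * x * (n + 1) + ((n + 1 : ℕ) : ℝ) * π := by
    push_cast; ring
  rw [harg, Real.cos_add_nat_mul_pi]
  ring

theorem planeWave_eq_stdAddChar (N : ℕ) [NeZero N] (ν : ℤ) (m : ZMod N) :
    planeWave N ν m = ZMod.stdAddChar ((ν : ZMod N) * m) := by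
  have hcast : (ν : ZMod N) * m = ((ν * m.val : ℤ) : ZMod N) := by push_cast; simp
  rw [hcast, ZMod.stdAddChar_coe, planeWave]
  push_cast
  ring_nf

theorem Tshift_planeWave (N : ℕ) [NeZero N] (ν j : ℤ) (m : ZMod N) :
    Tshift N j (planeWave N ν) m = exp (2 * π * I * ν * j / N) * planeWave N ν m := by
  rw [Tshift, planeWave_eq_stdAddChar, planeWave_eq_stdAddChar, mul_add, AddChar.map_add_eq_mul,
    mul_comm, ← Int.cast_mul, ZMod.stdAddChar_coe]
  push_cast
  ring_nf

theorem Tshift_add_Tshift_neg_planeWave (N : ℕ) [NeZero N] (ν j : ℤ) (m : ZMod N) :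
    Tshift N j (planeWave N ν) m + Tshift N (-j) (planeWave N ν) m
      = ((2 * Real.cos (2 * π * (ν / N) * j) : ℝ) : ℂ) * planeWave N ν m := by
  rw [Tshift_planeWave, Tshift_planeWave, ← add_mul, ofReal_mul, ofReal_cos, Complex.cos]
  congr 1
  push_cast
  ring_nf

theorem opA_planeWave_eigenvector_general (N : ℕ) [NeZero N] (ℓ : ℝ) (ν : ℤ)
    (hν₁ : -(N : ℤ) ≤ 2*ν) (hν₂ : 2*ν < (N : ℤ)) (m : ZMod N) :
    opA N ℓ (planeWave N ν) m
      = ((((ν : ℝ) * ℓ / N)^2 : ℝ) : ℂ) * planeWave N ν m := by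
  have hN : (0 : ℝ) < N := by exact_mod_cast Nat.pos_of_ne_zero (NeZero.ne N)
  have hx : (ν / N : ℝ) ∈ Icc (-1 / 2) (1 / 2) := by
    have h₁ : -(N : ℝ) ≤ 2 * ν := by exact_mod_cast hν₁
    have h₂ : 2 * (ν : ℝ) < N := by exact_mod_cast hν₂
    constructor
    · rw [le_div_iff₀ hN]; linarith
    · rw [div_le_iff₀ hN]; linarith
  have hsum := (Complex.hasSum_ofReal.mpr (hasSum_neg_one_pow_div_sq_mul_cos hx)).mul_right
    (2 * planeWave N ν m)
  rw [opA, (hsum.congr_fun fun n => ?_).tsum_eq]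
  · push_cast
    field_simp
    ring
  · rw [Tshift_add_Tshift_neg_planeWave]
    push_cast
    ring

/-- the plane wave ψ^{(ν)} (with -N/2 ≤ ν < N/2) is an eigenvector of
op_N(a) with eigenvalue (νℓ/N)². -/
theorem opA_planeWave_eigenvector (N : ℕ) [NeZero N] (ℓ : ℝ) (hℓ : 0 < ℓ) (ν : ℤ)
    (hν₁ : -(N : ℤ) ≤ 2*ν) (hν₂ : 2*ν < (N : ℤ)) (m : ZMod N) :
    opA N ℓ (planeWave N ν) m
      = ((((ν : ℝ) * ℓ / N)^2 : ℝ) : ℂ) * planeWave N ν m :=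
  opA_planeWave_eigenvector_general N ℓ ν hν₁ hν₂ m
end

section
/- The derivative with respect to E of S_p(E) = 4E·arsinh(√(ℓ²/(8E) - 1)) - (ℓ/2)√(ℓ² - 8E) is t_p(E) = 4·arsinh(√(ℓ²/(8E) - 1)), for 0 < E < ℓ²/8. -/
/-!
Write `S_p(E) = E · t_p(E) - (ℓ/2)√(ℓ² - 8E)`. By the product rule
`S_p' = t_p + E · t_p' - ((ℓ/2)√(ℓ² - 8E))'`, and the last two terms cancel: both equal
`-2ℓ/√(ℓ² - 8E)`, since `√(1 + (ℓ²/(8E) - 1)) = ℓ/√(8E)` in the derivative of `arsinh`.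
-/

open Real

theorem HasDerivAt.id_mul_sub_of_mul_deriv_eq {f g : ℝ → ℝ} {f' g' x : ℝ}
    (hf : HasDerivAt f f' x) (hg : HasDerivAt g g' x) (h : x * f' = g') :
    HasDerivAt (fun y => y * f y - g y) (f x) x := by
  refine (((hasDerivAt_id' x).mul hf).sub hg).congr_deriv ?_
  rw [← h]
  ring

theorem hasDerivAt_arsinh_sqrt_div_mul_sub_one {a c x : ℝ} (hcx : 0 < c * x) (hlt : c * x < a) :
    HasDerivAt (fun y => arsinh √(a / (c * y) - 1)) (-(√a / (2 * x * √(a - c * x)))) x := by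
  have hc : c ≠ 0 := left_ne_zero_of_mul hcx.ne'
  have hx : x ≠ 0 := right_ne_zero_of_mul hcx.ne'
  have hv : a / (c * x) - 1 = (a - c * x) / (c * x) := by field_simp
  have hv_pos : 0 < a / (c * x) - 1 := by rw [hv]; exact div_pos (sub_pos.2 hlt) hcx
  have hinner : HasDerivAt (fun y => a / (c * y) - 1) (-(a * c) / (c * x) ^ 2) x := by
    simpa using ((hasDerivAt_const x a).div ((hasDerivAt_id' x).const_mul c) hcx.ne').sub_const 1
  convert (hinner.sqrt hv_pos.ne').arsinh using 1
  rw [sq_sqrt hv_pos.le, add_sub_cancel, hv, sqrt_div' _ hcx.le, sqrt_div' _ hcx.le, smul_eq_mul]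
  have : 0 < √(a - c * x) := sqrt_pos.2 (sub_pos.2 hlt)
  have : 0 < √(c * x) := sqrt_pos.2 hcx
  have : 0 < √a := sqrt_pos.2 (hcx.trans hlt)
  field_simp
  rw [sq_sqrt (hcx.trans hlt).le, mul_comm x c, sq_sqrt hcx.le]
  ring

/-- dS_p/dE = t_p, i.e. the derivative of
S_p(E) = 4E·arsinh(√(ℓ²/(8E) - 1)) - (ℓ/2)√(ℓ² - 8E) is
t_p(E) = 4·arsinh(√(ℓ²/(8E) - 1)) for 0 < E < ℓ²/8. -/
theorem action_hasDerivAt_period (ℓ E : ℝ) (hℓ : 0 < ℓ) (hE : 0 < E) (hE' : E < ℓ^2/8) :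
    HasDerivAt (fun E' : ℝ =>
        4*E'*Real.arsinh (Real.sqrt (ℓ^2/(8*E') - 1)) - (ℓ/2) * Real.sqrt (ℓ^2 - 8*E'))
      (4*Real.arsinh (Real.sqrt (ℓ^2/(8*E) - 1))) E := by
  have h8E : 0 < 8 * E := by positivity
  have hlt : 8 * E < ℓ ^ 2 := by linarith
  have hT := (hasDerivAt_arsinh_sqrt_div_mul_sub_one h8E hlt).const_mul 4
  have hR := ((((hasDerivAt_id' E).const_mul 8).const_sub (ℓ ^ 2)).sqrt
    (sub_pos.2 hlt).ne').const_mul (ℓ / 2)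
  have hcancel : E * (4 * -(√(ℓ ^ 2) / (2 * E * √(ℓ ^ 2 - 8 * E)))) =
      ℓ / 2 * (-(8 * 1) / (2 * √(ℓ ^ 2 - 8 * E))) := by
    have : 0 < √(ℓ ^ 2 - 8 * E) := sqrt_pos.2 (sub_pos.2 hlt)
    rw [sqrt_sq hℓ.le]
    field_simp
    ring
  convert hT.id_mul_sub_of_mul_deriv_eq hR hcancel using 2 with E'
  ring
end
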